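/- arXiv:1312.3859 — 3 statements merged into one kernel-verified Lean document; each statement's English description precedes it below -/
import Mathlib

section
/- For every real β, the sequences (c_k) and (a_k) satisfy Σ_{k+ℓ=n, k,ℓ≥0} a_k c_ℓ = δ_{n,0} for every integer n ≥ 0; equivalently, for every α ≥ 1 the α×α lower-triangular Toeplitz matrix with (i,j) entry c_{i−j} for i ≥ j (and 0 for i < j) is invertible, with inverse the α×α lower-triangular Toeplitz matrix with (i,j) entry a_{i−j} for i ≥ j (and 0 for i < j). -/
/-- Physicists' Hermite polynomial `H_n` at a real argument:
`H_n(x) = n! · Σ_{m=0}^{⌊n/2⌋} (−1)^m (2x)^{n−2m} / (m!(n−2m)!)`. -/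
noncomputable def HR (n : ℕ) (x : ℝ) : ℝ :=
  (n.factorial : ℝ) * ∑ m ∈ Finset.range (n / 2 + 1),
    (-1 : ℝ) ^ m * (2 * x) ^ (n - 2 * m) / ((m.factorial : ℝ) * ((n - 2 * m).factorial : ℝ))

/-- Normalized Hermite polynomial `H̃_n(x) = H_n(x)/n!` at a real argument. -/
noncomputable def HtR (n : ℕ) (x : ℝ) : ℝ := HR n x / (n.factorial : ℝ)

/-- Complex normalized Hermite polynomial, used to define `P_n`. -/
noncomputable def HtC (n : ℕ) (x : ℂ) : ℂ :=
  ((n.factorial : ℂ) * ∑ m ∈ Finset.range (n / 2 + 1),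
    (-1 : ℂ) ^ m * (2 * x) ^ (n - 2 * m) / ((m.factorial : ℂ) * ((n - 2 * m).factorial : ℂ)))
    / (n.factorial : ℂ)

/-- The real polynomial `P_n`, determined by `P_n(x) = i^{−n}·H̃_n(i x)` (which is real
for real `x`). -/
noncomputable def PR (n : ℕ) (x : ℝ) : ℝ :=
  (Complex.I ^ (-(n : ℤ)) * HtC n (Complex.I * x)).re

/-- `c_k = 2^{k/2}·H̃_k(β√2)`. -/
noncomputable def cR (β : ℝ) (k : ℕ) : ℝ := Real.sqrt 2 ^ k * HtR k (β * Real.sqrt 2)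

/-- `a_k = 2^{k/2}·(−1)^k·P_k(β√2)`. -/
noncomputable def aR (β : ℝ) (k : ℕ) : ℝ := Real.sqrt 2 ^ k * (-1) ^ k * PR k (β * Real.sqrt 2)

/-!
Both sequences are coefficient sequences of Gaussian generating functions: the classical
`∑ H̃_n(x) tⁿ = exp(2xt − t²)` gives `∑ c_k tᵏ = exp(4βt − 2t²)`, and likewise
`∑ a_k tᵏ = exp(−4βt + 2t²)`. The two series are mutually inverse, which is the convolution
identity; lower-triangular Toeplitz matrices multiply like truncated power series, which gives
the matrix form.
-/

open PowerSeries Finset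

namespace PowerSeries

theorem coeff_expand_mul_eq_sum {R : Type*} [CommRing R] (p : ℕ) (hp : p ≠ 0) (f g : R⟦X⟧)
    (n : ℕ) :
    coeff n (expand p hp f * g) =
      ∑ m ∈ range (n / p + 1), coeff m f * coeff (n - p * m) g := by
  have hmultiples : (range (n / p + 1)).image (p * ·) = (range (n + 1)).filter (p ∣ ·) := by
    ext i
    simp only [mem_image, mem_range, mem_filter, Nat.lt_succ_iff, Nat.le_div_iff_mul_le
      (Nat.pos_of_ne_zero hp)]
    constructor
    · rintro ⟨m, hm, rfl⟩
      exact ⟨by linarith, dvd_mul_right p m⟩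
    · rintro ⟨hi, m, rfl⟩
      exact ⟨m, by linarith, rfl⟩
  rw [coeff_mul, Nat.sum_antidiagonal_eq_sum_range_succ_mk]
  simp only [coeff_expand, ite_mul, zero_mul]
  rw [← sum_filter, ← hmultiples, sum_image fun a _ b _ h => Nat.eq_of_mul_eq_mul_left
    (Nat.pos_of_ne_zero hp) h]
  simp [Nat.mul_div_cancel_left _ (Nat.pos_of_ne_zero hp)]

theorem rescale_expand {R : Type*} [CommRing R] (p : ℕ) (hp : p ≠ 0) (c : R) (f : R⟦X⟧) :
    rescale c (expand p hp f) = expand p hp (rescale (c ^ p) f) := by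
  ext n
  simp only [coeff_rescale, coeff_expand]
  split_ifs with h
  · obtain ⟨m, rfl⟩ := h
    rw [Nat.mul_div_cancel_left _ (Nat.pos_of_ne_zero hp), pow_mul]
  · rw [mul_zero]

end PowerSeries

section ExpQuad

variable {A : Type*} [CommRing A] [Algebra ℚ A]

/-- The power series `exp (a X + b X²)`. -/
noncomputable def expQuad (a b : A) : A⟦X⟧ :=
  expand 2 two_ne_zero (rescale b (exp A)) * rescale a (exp A)

theorem expQuad_mul_expQuad (a b a' b' : A) :
    expQuad a b * expQuad a' b' = expQuad (a + a') (b + b') := by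
  rw [expQuad, expQuad, expQuad, ← exp_mul_exp_eq_exp_add, ← exp_mul_exp_eq_exp_add, map_mul]
  ring

theorem expQuad_zero_zero : expQuad (0 : A) 0 = 1 := by
  simp [expQuad]

theorem rescale_expQuad (c a b : A) : rescale c (expQuad a b) = expQuad (c * a) (c ^ 2 * b) := by
  rw [expQuad, expQuad, map_mul, rescale_expand, rescale_rescale, rescale_rescale, mul_comm a,
    mul_comm b]

end ExpQuad

theorem coeff_expQuad {K : Type*} [Field K] [CharZero K] (a b : K) (n : ℕ) :
    coeff n (expQuad a b) =
      ∑ m ∈ range (n / 2 + 1),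
        b ^ m / m.factorial * (a ^ (n - 2 * m) / (n - 2 * m).factorial) := by
  simp [expQuad, coeff_expand_mul_eq_sum, coeff_exp, div_eq_mul_inv]

theorem HtR_eq_coeff_expQuad (n : ℕ) (x : ℝ) : HtR n x = coeff n (expQuad (2 * x) (-1)) := by
  have hn : (n.factorial : ℝ) ≠ 0 := by positivity
  rw [HtR, HR, mul_div_cancel_left₀ _ hn, coeff_expQuad]
  refine sum_congr rfl fun m _ => ?_
  ring

theorem HtC_eq_coeff_expQuad (n : ℕ) (z : ℂ) : HtC n z = coeff n (expQuad (2 * z) (-1)) := by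
  have hn : (n.factorial : ℂ) ≠ 0 := Nat.cast_ne_zero.mpr n.factorial_ne_zero
  rw [HtC, mul_div_cancel_left₀ _ hn, coeff_expQuad]
  refine sum_congr rfl fun m _ => ?_
  ring

theorem PR_eq_coeff_expQuad (n : ℕ) (x : ℝ) : PR n x = coeff n (expQuad (2 * x) 1) := by
  have hI : Complex.I ^ (-(n : ℤ)) * HtC n (Complex.I * x) =
      coeff n (expQuad (2 * (x : ℂ)) 1) := by
    rw [HtC_eq_coeff_expQuad, zpow_neg, zpow_natCast, ← inv_pow, ← coeff_rescale,
      rescale_expQuad]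
    congr 2
    · field_simp
    · rw [inv_pow, Complex.I_sq]
      norm_num
  have hreal : coeff n (expQuad (2 * (x : ℂ)) 1) = (coeff n (expQuad (2 * x) 1) : ℝ) := by
    rw [coeff_expQuad, coeff_expQuad]
    push_cast
    rfl
  rw [PR, hI, hreal, Complex.ofReal_re]

theorem cR_eq_coeff_expQuad (β : ℝ) (n : ℕ) : cR β n = coeff n (expQuad (4 * β) (-2)) := by
  have h2 : √2 ^ 2 = 2 := Real.sq_sqrt zero_le_two
  rw [cR, HtR_eq_coeff_expQuad, ← coeff_rescale, rescale_expQuad, h2]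
  congr 2
  · linear_combination 2 * β * h2
  · ring

theorem aR_eq_coeff_expQuad (β : ℝ) (n : ℕ) : aR β n = coeff n (expQuad (-4 * β) 2) := by
  have h2 : √2 ^ 2 = 2 := Real.sq_sqrt zero_le_two
  rw [aR, PR_eq_coeff_expQuad, ← mul_pow, ← coeff_rescale, rescale_expQuad]
  congr 2
  · linear_combination -2 * β * h2
  · linear_combination h2

section LowerToeplitz

variable {R : Type*}

def lowerToeplitz [Zero R] (α : ℕ) (u : ℕ → R) : Matrix (Fin α) (Fin α) R :=
  Matrix.of fun i j => if (j : ℕ) ≤ i then u (i - j) else 0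

theorem lowerToeplitz_mul_lowerToeplitz [Semiring R] (α : ℕ) (u v : ℕ → R) :
    lowerToeplitz α u * lowerToeplitz α v =
      lowerToeplitz α fun n => ∑ p ∈ antidiagonal n, u p.1 * v p.2 := by
  ext i j
  simp only [lowerToeplitz, Matrix.mul_apply, Matrix.of_apply, ite_zero_mul_ite_zero,
    ← sum_filter]
  split_ifs with hji
  · refine sum_bij (fun k _ => ((i : ℕ) - k, (k : ℕ) - j)) ?_ ?_ ?_ ?_
    · intro k hk
      simp only [mem_filter, mem_univ, true_and, HasAntidiagonal.mem_antidiagonal] at hk ⊢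
      omega
    · intro k hk l hl hkl
      simp only [mem_filter, mem_univ, true_and, Prod.mk.injEq] at hk hl hkl
      exact Fin.ext (by omega)
    · intro p hp
      rw [HasAntidiagonal.mem_antidiagonal] at hp
      refine ⟨⟨j + p.2, by omega⟩, ?_, ?_⟩
      · simp only [mem_filter, mem_univ, true_and]
        omega
      · ext <;> simp only <;> omega
    · intro k _
      rfl
  · refine sum_eq_zero fun k hk => absurd ?_ hji
    simp only [mem_filter, mem_univ, true_and] at hk
    omega

theorem lowerToeplitz_mul_eq_one [Semiring R] {α : ℕ} {u v : ℕ → R}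
    (h : ∀ n, ∑ p ∈ antidiagonal n, u p.1 * v p.2 = if n = 0 then 1 else 0) :
    lowerToeplitz α u * lowerToeplitz α v = 1 := by
  rw [lowerToeplitz_mul_lowerToeplitz, funext h]
  ext i j
  simp only [lowerToeplitz, Matrix.of_apply, Matrix.one_apply, Fin.ext_iff]
  split_ifs <;> first | rfl | omega

end LowerToeplitz

/-- `Σ_{k+ℓ=n} a_k c_ℓ = δ_{n,0}`; equivalently, the lower-triangular Toeplitz matrix with
symbol `(c_k)` is invertible, with inverse the lower-triangular Toeplitz matrix with
symbol `(a_k)`. -/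
theorem toeplitz_inverse (β : ℝ) :
    (∀ n : ℕ, ∑ p ∈ Finset.HasAntidiagonal.antidiagonal n, aR β p.1 * cR β p.2
        = if n = 0 then 1 else 0)
    ∧ ∀ α : ℕ, 1 ≤ α →
        (Matrix.of fun i j : Fin α => if (j : ℕ) ≤ (i : ℕ) then cR β ((i : ℕ) - (j : ℕ)) else 0)
            * (Matrix.of fun i j : Fin α =>
                if (j : ℕ) ≤ (i : ℕ) then aR β ((i : ℕ) - (j : ℕ)) else 0) = 1
        ∧ (Matrix.of fun i j : Fin α => if (j : ℕ) ≤ (i : ℕ) then aR β ((i : ℕ) - (j : ℕ)) else 0)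
            * (Matrix.of fun i j : Fin α =>
                if (j : ℕ) ≤ (i : ℕ) then cR β ((i : ℕ) - (j : ℕ)) else 0) = 1 := by
  have hinv : expQuad (-4 * β) 2 * expQuad (4 * β) (-2) = 1 := by
    rw [expQuad_mul_expQuad]
    norm_num [expQuad_zero_zero]
  have hac (n : ℕ) :
      ∑ p ∈ antidiagonal n, aR β p.1 * cR β p.2 = if n = 0 then 1 else 0 := by
    simp only [aR_eq_coeff_expQuad, cR_eq_coeff_expQuad, ← coeff_mul, hinv, coeff_one]
  have hca (n : ℕ) :
      ∑ p ∈ antidiagonal n, cR β p.1 * aR β p.2 = if n = 0 then 1 else 0 := by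
    simp only [aR_eq_coeff_expQuad, cR_eq_coeff_expQuad, ← coeff_mul]
    rw [mul_comm, hinv, coeff_one]
  exact ⟨hac, fun α _ => ⟨lowerToeplitz_mul_eq_one hca, lowerToeplitz_mul_eq_one hac⟩⟩
end

section
/- For every integer n ≥ 1 and all vectors x, y ∈ ℝⁿ, the product of the n×n matrix with (i,j) entry H̃_{n−j}(−x_i) and the n×n matrix with (i,j) entry P_{i−1}(y_j) equals the n×n matrix with (i,j) entry (2(y_j − x_i))^{n−1}/(n−1)!. -/
/-!
The generating functions are `∑ H̃ₙ(a) tⁿ = e^{-t²} e^{2at}` and `∑ Pₙ(b) tⁿ = e^{t²} e^{2bt}`.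
Their product is `e^{2(a+b)t}`, whose `N`-th coefficient `(2(a+b))^N / N!` is the Cauchy
convolution `∑ₖ H̃_{N-k}(a) Pₖ(b)`: with `N = n - 1`, `a = -xᵢ`, `b = yⱼ` this is entry `(i, j)`
of the matrix product.
-/

open PowerSeries Finset

theorem PowerSeries.coeff_expand_mul_eq_sum_s7 {R : Type*} [CommRing R] (p : ℕ) (hp : p ≠ 0)
    (f g : R⟦X⟧) (n : ℕ) :
    coeff n (expand p hp f * g) =
      ∑ m ∈ range (n / p + 1), coeff m f * coeff (n - p * m) g := by
  rw [coeff_mul, Nat.sum_antidiagonal_eq_sum_range_succ_mk]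
  simp only [coeff_expand, ite_mul, zero_mul]
  rw [← sum_filter]
  have hp' := Nat.pos_of_ne_zero hp
  refine sum_nbij' (· / p) (p * ·) ?_ ?_ ?_ ?_ ?_
  all_goals intro m hm
  all_goals simp only [mem_filter, mem_range, Nat.lt_succ_iff] at hm ⊢
  · exact Nat.div_le_div_right hm.1
  · exact ⟨(Nat.le_div_iff_mul_le hp').mp hm |>.trans_eq' (mul_comm _ _), dvd_mul_right _ _⟩
  · exact Nat.mul_div_cancel' hm.2
  · exact Nat.mul_div_cancel_left m hp'
  · rw [Nat.mul_div_cancel' hm.2]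

lemma HtR_eq_sum (n : ℕ) (a : ℝ) :
    HtR n a = ∑ m ∈ range (n / 2 + 1),
      (-1 : ℝ) ^ m * (2 * a) ^ (n - 2 * m) / (m.factorial * (n - 2 * m).factorial) :=
  mul_div_cancel_left₀ _ (Nat.cast_ne_zero.mpr n.factorial_ne_zero)

lemma Complex.I_zpow_neg_mul_I_pow_sub_two_mul {n m : ℕ} (h : 2 * m ≤ n) :
    I ^ (-(n : ℤ)) * I ^ (n - 2 * m) = (-1) ^ m := by
  obtain ⟨k, rfl⟩ := Nat.exists_eq_add_of_le h
  rw [Nat.add_sub_cancel_left, zpow_neg, zpow_natCast, pow_add, pow_mul, I_sq,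
    mul_inv_rev, mul_comm, ← mul_assoc, mul_inv_cancel₀ (pow_ne_zero _ I_ne_zero), one_mul,
    ← inv_pow, inv_neg_one]

lemma PR_eq_sum (n : ℕ) (b : ℝ) :
    PR n b = ∑ m ∈ range (n / 2 + 1),
      (2 * b) ^ (n - 2 * m) / (m.factorial * (n - 2 * m).factorial) := by
  suffices h : Complex.I ^ (-(n : ℤ)) * HtC n (Complex.I * b) =
      ((∑ m ∈ range (n / 2 + 1),
        (2 * b) ^ (n - 2 * m) / (m.factorial * (n - 2 * m).factorial) : ℝ) : ℂ) by
    rw [PR, h, Complex.ofReal_re]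
  rw [HtC, mul_div_cancel_left₀ _ (Nat.cast_ne_zero.mpr n.factorial_ne_zero), mul_sum]
  push_cast
  refine sum_congr rfl fun m hm => ?_
  have hI := Complex.I_zpow_neg_mul_I_pow_sub_two_mul (n := n) (m := m)
    (by have := mem_range.mp hm; omega)
  have hsq : ((-1 : ℂ) ^ m) * (-1) ^ m = 1 := by rw [← mul_pow]; norm_num
  rw [mul_pow, mul_pow]
  linear_combination 2 ^ (n - 2 * m) * (b : ℂ) ^ (n - 2 * m) /
    (m.factorial * (n - 2 * m).factorial) * ((-1) ^ m * hI + hsq)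

lemma mk_HtR (a : ℝ) :
    mk (HtR · a) = expand 2 two_ne_zero (evalNegHom (exp ℝ)) * rescale (2 * a) (exp ℝ) := by
  ext n
  rw [coeff_mk, coeff_expand_mul_eq_sum_s7, HtR_eq_sum]
  refine sum_congr rfl fun m _ => ?_
  simp only [evalNegHom, coeff_rescale, coeff_exp, one_div, map_inv₀, map_natCast]
  ring

lemma mk_PR (b : ℝ) :
    mk (PR · b) = expand 2 two_ne_zero (exp ℝ) * rescale (2 * b) (exp ℝ) := by
  ext n
  rw [coeff_mk, coeff_expand_mul_eq_sum_s7, PR_eq_sum]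
  refine sum_congr rfl fun m _ => ?_
  simp only [coeff_rescale, coeff_exp, one_div, map_inv₀, map_natCast]
  ring

lemma sum_range_HtR_mul_PR (N : ℕ) (a b : ℝ) :
    ∑ k ∈ range (N + 1), HtR (N - k) a * PR k b = (2 * (a + b)) ^ N / N.factorial := by
  have hgauss : expand 2 two_ne_zero (evalNegHom (exp ℝ)) * expand 2 two_ne_zero (exp ℝ) = 1 := by
    rw [← map_mul, mul_comm, exp_mul_exp_neg_eq_one, map_one]
  have hprod : mk (PR · b) * mk (HtR · a) = rescale (2 * (a + b)) (exp ℝ) := by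
    rw [mk_PR, mk_HtR, mul_add, ← exp_mul_exp_eq_exp_add]
    linear_combination (rescale (2 * b) (exp ℝ) * rescale (2 * a) (exp ℝ)) * hgauss
  calc ∑ k ∈ range (N + 1), HtR (N - k) a * PR k b
      = coeff N (mk (PR · b) * mk (HtR · a)) := by
        rw [coeff_mul, Nat.sum_antidiagonal_eq_sum_range_succ_mk]
        simp only [coeff_mk, mul_comm]
    _ = (2 * (a + b)) ^ N / N.factorial := by
        rw [hprod, coeff_rescale, coeff_exp]
        simp [div_eq_mul_inv]

theorem hermite_matrix_product_general (n : ℕ) (x y : Fin n → ℝ) :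
    (Matrix.of fun i j : Fin n => HtR (n - 1 - (j : ℕ)) (-(x i))) *
      (Matrix.of fun i j : Fin n => PR (i : ℕ) (y j))
    = Matrix.of fun i j : Fin n =>
        (2 * (y j - x i)) ^ (n - 1) / ((n - 1).factorial : ℝ) := by
  ext i j
  obtain ⟨N, rfl⟩ := Nat.exists_eq_add_one_of_ne_zero i.pos.ne'
  simp only [Matrix.mul_apply, Matrix.of_apply, Nat.add_sub_cancel]
  rw [Fin.sum_univ_eq_sum_range (fun k => HtR (N - k) (-x i) * PR k (y j)),
    sum_range_HtR_mul_PR, neg_add_eq_sub]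

/-- The product of the matrix `(H̃_{n−j}(−x_i))_{i,j}` with `(P_{i−1}(y_j))_{i,j}` equals
`((2(y_j − x_i))^{n−1}/(n−1)!)_{i,j}` (indices `i, j` running over `1,…,n`). -/
theorem hermite_matrix_product (n : ℕ) (hn : 1 ≤ n) (x y : Fin n → ℝ) :
    (Matrix.of fun i j : Fin n => HtR (n - 1 - (j : ℕ)) (-(x i))) *
      (Matrix.of fun i j : Fin n => PR (i : ℕ) (y j))
    = Matrix.of fun i j : Fin n =>
        (2 * (y j - x i)) ^ (n - 1) / ((n - 1).factorial : ℝ) :=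
  hermite_matrix_product_general n x y
end

section
/- For every integer n ≥ 1 and every x ∈ ℝⁿ, the determinant of the n×n matrix with (i,j) entry H̃_{n−j}(−x_i) equals ((−2)^{n(n−1)/2} / Π_{k=1}^{n−1} k!) · Π_{1≤i<j≤n} (x_i − x_j). -/
/-!
Reversing both the rows and the columns does not change the determinant and turns the
matrix into `(H̃_j(−x_{n−1−i}))_{i,j}`. Its `j`-th column is the evaluation of a polynomial
of degree `j` with leading coefficient `2^j/j!`, so the matrix is a Vandermonde matrix times
an upper triangular one, and the determinant is `∏ 2^j/j!` times the Vandermonde product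
`∏_{i<j} (x_j − x_i)`.
Flipping the `n(n−1)/2` differences to `x_i − x_j` produces the sign.
-/

open Polynomial Finset

noncomputable def normalizedHermite (k : ℕ) : ℝ[X] :=
  ∑ m ∈ range (k / 2 + 1),
    C ((-1 : ℝ) ^ m * 2 ^ (k - 2 * m) / ((m.factorial : ℝ) * ((k - 2 * m).factorial : ℝ)))
      * X ^ (k - 2 * m)

theorem eval_normalizedHermite (k : ℕ) (y : ℝ) : (normalizedHermite k).eval y = HtR k y := by
  rw [HtR, HR, mul_div_cancel_left₀ _ (by positivity), normalizedHermite, eval_finsetSum]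
  refine sum_congr rfl fun m _ => ?_
  simp only [eval_mul, eval_C, eval_pow, eval_X, mul_pow]
  ring

theorem natDegree_normalizedHermite_le (k : ℕ) : (normalizedHermite k).natDegree ≤ k :=
  natDegree_sum_le_of_forall_le _ _ fun m _ =>
    (natDegree_C_mul_le _ _).trans (by rw [natDegree_X_pow]; omega)

theorem coeff_normalizedHermite_self (k : ℕ) :
    (normalizedHermite k).coeff k = 2 ^ k / (k.factorial : ℝ) := by
  rw [normalizedHermite, finsetSum_coeff, sum_eq_single 0]
  · simp
  · intro m hm hm0
    have hk : k ≠ k - 2 * m := by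
      have := mem_range.mp hm
      omega
    simp [coeff_X_pow, hk]
  · simp

theorem Matrix.det_eval_eq_prod_coeff_mul_det_vandermonde {R : Type*} [CommRing R] {n : ℕ}
    (v : Fin n → R) (p : Fin n → R[X]) (h_deg : ∀ i, (p i).natDegree ≤ i) :
    (Matrix.of fun i j => (p j).eval (v i)).det
      = (∏ i, (p i).coeff i) * (vandermonde v).det := by
  rw [eval_matrixOfPolynomials_eq_vandermonde_mul_matrixOfPolynomials v p h_deg, det_mul,
    det_of_isUpperTriangular (matrixOfPolynomials_blockTriangular p h_deg), mul_comm]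
  rfl

theorem Fin.prod_Ioi_eq_prod_filter_lt {M : Type*} [CommMonoid M] {n : ℕ}
    (f : Fin n → Fin n → M) :
    ∏ i, ∏ j ∈ Ioi i, f i j
      = ∏ p ∈ univ.filter (fun p : Fin n × Fin n => p.1 < p.2), f p.1 p.2 := by
  rw [prod_filter, Fintype.prod_prod_type]
  refine prod_congr rfl fun i _ => ?_
  rw [← prod_filter]
  congr 1
  ext j
  simp

theorem Fin.prod_filter_lt_rev {M : Type*} [CommMonoid M] {n : ℕ} (f : Fin n → Fin n → M) :
    ∏ p ∈ univ.filter (fun p : Fin n × Fin n => p.1 < p.2), f (Fin.rev p.2) (Fin.rev p.1)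
      = ∏ p ∈ univ.filter (fun p : Fin n × Fin n => p.1 < p.2), f p.1 p.2 := by
  refine prod_nbij' (fun p => (Fin.rev p.2, Fin.rev p.1)) (fun p => (Fin.rev p.2, Fin.rev p.1))
    ?_ ?_ ?_ ?_ fun _ _ => rfl <;> simp

theorem Fin.prod_filter_lt_sub_comm {R : Type*} [CommRing R] {n : ℕ} (x : Fin n → R) :
    ∏ p ∈ univ.filter (fun p : Fin n × Fin n => p.1 < p.2), (x p.2 - x p.1)
      = (-1) ^ (n * (n - 1) / 2)
        * ∏ p ∈ univ.filter (fun p : Fin n × Fin n => p.1 < p.2), (x p.1 - x p.2) := by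
  have hcard : #(univ.filter fun p : Fin n × Fin n => p.1 < p.2) = n * (n - 1) / 2 := by
    rw [Fintype.card_product_filter_lt, Fintype.card_fin, Nat.choose_two_right]
  rw [← hcard, ← Finset.prod_const, ← prod_mul_distrib]
  exact prod_congr rfl fun _ _ => by ring

theorem Fin.prod_two_pow_div_factorial (n : ℕ) :
    ∏ j : Fin n, (2 : ℝ) ^ (j : ℕ) / ((j : ℕ).factorial : ℝ)
      = 2 ^ (n * (n - 1) / 2) / ∏ k ∈ range (n - 1), ((k + 1).factorial : ℝ) := by
  rw [prod_div_distrib, prod_pow_eq_pow_sum, Fin.sum_univ_eq_sum_range (fun i => i) n,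
    sum_range_id, Fin.prod_univ_eq_prod_range (fun k => (k.factorial : ℝ)) n]
  cases n with
  | zero => simp
  | succ m => simp [prod_range_succ']

theorem hermite_vandermonde_general (n : ℕ) (x : Fin n → ℝ) :
    (Matrix.of fun i j : Fin n => HtR (n - 1 - (j : ℕ)) (-(x i))).det
      = ((-2 : ℝ) ^ (n * (n - 1) / 2) / ∏ k ∈ Finset.range (n - 1), ((k + 1).factorial : ℝ))
          * ∏ p ∈ Finset.univ.filter (fun p : Fin n × Fin n => p.1 < p.2), (x p.1 - x p.2) := by
  have hrev : (Matrix.of fun i j : Fin n => HtR (n - 1 - (j : ℕ)) (-(x i))).submatrix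
      Fin.revPerm Fin.revPerm
      = Matrix.of fun i j : Fin n => (normalizedHermite (j : ℕ)).eval (-x (Fin.rev i)) := by
    ext i j
    simp only [Matrix.submatrix_apply, Matrix.of_apply, Fin.revPerm_apply, Fin.val_rev,
      eval_normalizedHermite]
    congr 1
    omega
  rw [← Matrix.det_submatrix_equiv_self Fin.revPerm, hrev,
    Matrix.det_eval_eq_prod_coeff_mul_det_vandermonde _ _ fun j =>
      natDegree_normalizedHermite_le j,
    Matrix.det_vandermonde,
    Fin.prod_Ioi_eq_prod_filter_lt fun i j => -x (Fin.rev j) - -x (Fin.rev i),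
    Fin.prod_filter_lt_rev fun i j => -x i - -x j]
  simp only [coeff_normalizedHermite_self, Fin.prod_two_pow_div_factorial, neg_sub_neg,
    Fin.prod_filter_lt_sub_comm, neg_pow (2 : ℝ)]
  ring

/-- `det (H̃_{n−j}(−x_i))_{1≤i,j≤n} = ((−2)^{n(n−1)/2} / Π_{k=1}^{n−1} k!) · Π_{i<j} (x_i − x_j)`. -/
theorem hermite_vandermonde (n : ℕ) (hn : 1 ≤ n) (x : Fin n → ℝ) :
    (Matrix.of fun i j : Fin n => HtR (n - 1 - (j : ℕ)) (-(x i))).det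
      = ((-2 : ℝ) ^ (n * (n - 1) / 2) / ∏ k ∈ Finset.range (n - 1), ((k + 1).factorial : ℝ))
          * ∏ p ∈ Finset.univ.filter (fun p : Fin n × Fin n => p.1 < p.2), (x p.1 - x p.2) :=
  hermite_vandermonde_general n x
end
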